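/- Let 0 < a < b, let n ≥ 1 be a natural number, and let Ψ : ℝ → ℝ be twice continuously differentiable on [a, b] with Ψ(a) = Ψ(b) = 0. Then ∫_a^b r ((Δ_{n+1}Ψ)(r))² dr − ∫_a^b r ((Δ_nΨ)(r))² dr ≥ (2n+1) ∫_a^b (2/r) (Ψ'(r) − Ψ(r)/r)² dr, and the inequality is strict if Ψ is not identically zero on [a, b]. -/

import Mathlib

/-!
Since `Δ_{n+1}Ψ = Δ_nΨ − (2n+1)Ψ/r²`, the difference `r (Δ_{n+1}Ψ)² − r (Δ_nΨ)²` is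
`(2n+1)(−2ΨΔ_nΨ/r + (2n+1)Ψ²/r³)`. Subtracting `(2n+1)(2/r)(Ψ' − Ψ/r)²` leaves
`(2n+1)(2n²+2n−1)Ψ²/r³` plus `−2(2n+1)` times the derivative of `ΨΨ'/r`, which integrates to zero
because `Ψ` vanishes at both ends. For `n ≥ 1` the remaining term is nonnegative, and positive
unless `Ψ ≡ 0`.
-/

open MeasureTheory

/-- The operator `(Δ_n Ψ)(r) = Ψ''(r) + Ψ'(r)/r − n² Ψ(r)/r²`. -/
noncomputable def DeltaOp (n : ℕ) (Ψ : ℝ → ℝ) : ℝ → ℝ :=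
  fun r => deriv (deriv Ψ) r + deriv Ψ r / r - (n : ℝ) ^ 2 * Ψ r / r ^ 2

open Set

/-- `DeltaOp` with the derivatives supplied. We supply one-sided derivatives on `[a, b]`, since
`deriv Ψ` carries no information at the endpoints. -/
noncomputable def deltaOpWith (n : ℕ) (p p₁ p₂ : ℝ → ℝ) (r : ℝ) : ℝ :=
  p₂ r + p₁ r / r - (n : ℝ) ^ 2 * p r / r ^ 2

lemma mul_deltaOpWith_succ_sq_sub (n : ℕ) (p p₁ p₂ : ℝ → ℝ) {r : ℝ} (hr : r ≠ 0) :
    r * deltaOpWith (n + 1) p p₁ p₂ r ^ 2 - r * deltaOpWith n p p₁ p₂ r ^ 2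
        - (2 * n + 1) * (2 / r * (p₁ r - p r / r) ^ 2)
      = (2 * n + 1) * (2 * n ^ 2 + 2 * n - 1) * (p r ^ 2 / r ^ 3)
        - 2 * (2 * n + 1) * ((p₁ r ^ 2 + p r * p₂ r) / r - p r * p₁ r / r ^ 2) := by
  simp only [deltaOpWith]
  push_cast
  field_simp
  ring

lemma deriv_eqOn_derivWithin {f : ℝ → ℝ} {s U : Set ℝ} (hU : IsOpen U) (hUs : U ⊆ s) :
    EqOn (deriv f) (derivWithin f s) U := fun _ hr =>
  (derivWithin_of_mem_nhds (Filter.mem_of_superset (hU.mem_nhds hr) hUs)).symm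

lemma deriv_deriv_eqOn_derivWithin {f : ℝ → ℝ} {s U : Set ℝ} (hU : IsOpen U) (hUs : U ⊆ s) :
    EqOn (deriv (deriv f)) (derivWithin (derivWithin f s) s) U := fun r hr => by
  rw [((deriv_eqOn_derivWithin hU hUs).eventuallyEq_of_mem (hU.mem_nhds hr)).deriv_eq,
    deriv_eqOn_derivWithin hU hUs hr]

lemma DeltaOp_eqOn_deltaOpWith (n : ℕ) (Ψ : ℝ → ℝ) {s U : Set ℝ} (hU : IsOpen U) (hUs : U ⊆ s) :
    EqOn (DeltaOp n Ψ)
      (deltaOpWith n Ψ (derivWithin Ψ s) (derivWithin (derivWithin Ψ s) s)) U := fun r hr => by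
  rw [DeltaOp, deltaOpWith, deriv_deriv_eqOn_derivWithin (f := Ψ) hU hUs hr,
    deriv_eqOn_derivWithin hU hUs hr]

lemma DifferentiableOn.hasDerivAt_derivWithin {f : ℝ → ℝ} {s : Set ℝ} {x : ℝ}
    (hf : DifferentiableOn ℝ f s) (hs : s ∈ nhds x) : HasDerivAt f (derivWithin f s x) x := by
  rw [derivWithin_of_mem_nhds hs]; exact hf.hasDerivAt hs

section Interval

variable {a b : ℝ} {p p₁ p₂ : ℝ → ℝ}

lemma setIntegral_deriv_mul_div_eq_zero (ha : 0 < a) (hab : a ≤ b)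
    (hp : ContinuousOn p (Icc a b)) (hp₁ : ContinuousOn p₁ (Icc a b))
    (hp₂ : ContinuousOn p₂ (Icc a b)) (hd : ∀ r ∈ Ioo a b, HasDerivAt p (p₁ r) r)
    (hd₁ : ∀ r ∈ Ioo a b, HasDerivAt p₁ (p₂ r) r) (hpa : p a = 0) (hpb : p b = 0) :
    ∫ r in Ioo a b, ((p₁ r ^ 2 + p r * p₂ r) / r - p r * p₁ r / r ^ 2) = 0 := by
  have hderiv : ∀ r ∈ Ioo a b, HasDerivAt (fun r => p r * p₁ r / r)
      ((p₁ r ^ 2 + p r * p₂ r) / r - p r * p₁ r / r ^ 2) r := by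
    intro r hr
    have hr0 : r ≠ 0 := (ha.trans hr.1).ne'
    refine (((hd r hr).mul (hd₁ r hr)).fun_div (hasDerivAt_id r) hr0).congr_deriv ?_
    simp only [Pi.mul_apply, id]
    field_simp
  have h0 : ∀ r ∈ Icc a b, r ≠ 0 := fun r hr => (ha.trans_le hr.1).ne'
  have hftc := intervalIntegral.integral_eq_sub_of_hasDerivAt_of_le hab
    (by fun_prop (disch := assumption)) hderiv
    (ContinuousOn.intervalIntegrable_of_Icc hab
      (by fun_prop (disch := first | exact h0 | (intro r hr; exact pow_ne_zero _ (h0 r hr)))))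
  rwa [intervalIntegral.integral_of_le hab, integral_Ioc_eq_integral_Ioo, hpa, hpb,
    zero_mul, zero_mul, zero_div, zero_div, sub_zero] at hftc

theorem setIntegral_deltaOpWith_succ_sub (ha : 0 < a) (hab : a ≤ b)
    (hp : ContinuousOn p (Icc a b)) (hp₁ : ContinuousOn p₁ (Icc a b))
    (hp₂ : ContinuousOn p₂ (Icc a b)) (hd : ∀ r ∈ Ioo a b, HasDerivAt p (p₁ r) r)
    (hd₁ : ∀ r ∈ Ioo a b, HasDerivAt p₁ (p₂ r) r) (hpa : p a = 0) (hpb : p b = 0) (n : ℕ) :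
    (∫ r in Ioo a b, r * deltaOpWith (n + 1) p p₁ p₂ r ^ 2)
        - (∫ r in Ioo a b, r * deltaOpWith n p p₁ p₂ r ^ 2)
        - (2 * n + 1) * ∫ r in Ioo a b, 2 / r * (p₁ r - p r / r) ^ 2
      = (2 * n + 1) * (2 * n ^ 2 + 2 * n - 1) * ∫ r in Ioo a b, p r ^ 2 / r ^ 3 := by
  have h0 : ∀ r ∈ Icc a b, r ≠ 0 := fun r hr => (ha.trans_le hr.1).ne'
  have hint : ∀ f : ℝ → ℝ, ContinuousOn f (Icc a b) → IntegrableOn f (Ioo a b) :=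
    fun f hf => hf.integrableOn_Icc.mono_set Ioo_subset_Icc_self
  have hΔ : ∀ m : ℕ, IntegrableOn (fun r => r * deltaOpWith m p p₁ p₂ r ^ 2) (Ioo a b) :=
    fun m => hint _ (by
      unfold deltaOpWith
      fun_prop (disch := first | exact h0 | (intro r hr; exact pow_ne_zero _ (h0 r hr))))
  have hJ : IntegrableOn (fun r => 2 / r * (p₁ r - p r / r) ^ 2) (Ioo a b) :=
    hint _ (by fun_prop (disch := exact h0))
  have hK : IntegrableOn (fun r => p r ^ 2 / r ^ 3) (Ioo a b) :=
    hint _ (by fun_prop (disch := intro r hr; exact pow_ne_zero _ (h0 r hr)))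
  have hflux : IntegrableOn (fun r => (p₁ r ^ 2 + p r * p₂ r) / r - p r * p₁ r / r ^ 2)
      (Ioo a b) :=
    hint _ (by fun_prop (disch := first | exact h0 | (intro r hr; exact pow_ne_zero _ (h0 r hr))))
  calc _ = ∫ r in Ioo a b, (r * deltaOpWith (n + 1) p p₁ p₂ r ^ 2
          - r * deltaOpWith n p p₁ p₂ r ^ 2 - (2 * n + 1) * (2 / r * (p₁ r - p r / r) ^ 2)) := by
        rw [← integral_const_mul, ← integral_sub (hΔ _) (hΔ _), ← integral_sub]
        exacts [(hΔ _).sub (hΔ _), hJ.const_mul _]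
    _ = ∫ r in Ioo a b, ((2 * n + 1) * (2 * n ^ 2 + 2 * n - 1) * (p r ^ 2 / r ^ 3)
          - 2 * (2 * n + 1) * ((p₁ r ^ 2 + p r * p₂ r) / r - p r * p₁ r / r ^ 2)) :=
        setIntegral_congr_fun measurableSet_Ioo fun r hr =>
          mul_deltaOpWith_succ_sq_sub n p p₁ p₂ (h0 r (Ioo_subset_Icc_self hr))
    _ = _ := by
        rw [integral_sub (hK.const_mul _) (hflux.const_mul _), integral_const_mul,
          integral_const_mul, setIntegral_deriv_mul_div_eq_zero ha hab hp hp₁ hp₂ hd hd₁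
            hpa hpb, mul_zero, sub_zero]

lemma setIntegral_sq_div_pow_three_pos (ha : 0 < a) (hab : a < b) (hp : ContinuousOn p (Icc a b))
    (hne : ∃ r ∈ Icc a b, p r ≠ 0) : 0 < ∫ r in Ioo a b, p r ^ 2 / r ^ 3 := by
  obtain ⟨r₀, hr₀, hpr₀⟩ := hne
  rw [← integral_Ioc_eq_integral_Ioo, ← intervalIntegral.integral_of_le hab.le]
  refine intervalIntegral.integral_pos hab ?_ (fun r hr => ?_) ⟨r₀, hr₀, ?_⟩
  · have h0 : ∀ r ∈ Icc a b, r ^ 3 ≠ 0 := fun r hr => pow_ne_zero _ (ha.trans_le hr.1).ne'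
    fun_prop (disch := exact h0)
  · have := ha.trans hr.1
    positivity
  · have := ha.trans_le hr₀.1
    positivity

end Interval

theorem setIntegral_DeltaOp_succ_sub {a b : ℝ} (ha : 0 < a) (hab : a < b) {Ψ : ℝ → ℝ}
    (hΨ : ContDiffOn ℝ 2 Ψ (Icc a b)) (hΨa : Ψ a = 0) (hΨb : Ψ b = 0) (n : ℕ) :
    (∫ r in Ioo a b, r * DeltaOp (n + 1) Ψ r ^ 2)
        - (∫ r in Ioo a b, r * DeltaOp n Ψ r ^ 2)
        - (2 * n + 1) * ∫ r in Ioo a b, 2 / r * (deriv Ψ r - Ψ r / r) ^ 2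
      = (2 * n + 1) * (2 * n ^ 2 + 2 * n - 1) * ∫ r in Ioo a b, Ψ r ^ 2 / r ^ 3 := by
  set Ψ₁ := derivWithin Ψ (Icc a b)
  have hu : UniqueDiffOn ℝ (Icc a b) := uniqueDiffOn_Icc hab
  have hΨ₁ : ContDiffOn ℝ 1 Ψ₁ (Icc a b) := hΨ.derivWithin hu (by norm_num)
  have hd : ∀ r ∈ Ioo a b, HasDerivAt Ψ (Ψ₁ r) r := fun r hr =>
    (hΨ.differentiableOn two_ne_zero).hasDerivAt_derivWithin (Icc_mem_nhds hr.1 hr.2)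
  have hd₁ : ∀ r ∈ Ioo a b, HasDerivAt Ψ₁ (derivWithin Ψ₁ (Icc a b) r) r := fun r hr =>
    (hΨ₁.differentiableOn one_ne_zero).hasDerivAt_derivWithin (Icc_mem_nhds hr.1 hr.2)
  have hΔ : ∀ m : ℕ, ∫ r in Ioo a b, r * DeltaOp m Ψ r ^ 2
      = ∫ r in Ioo a b, r * deltaOpWith m Ψ Ψ₁ (derivWithin Ψ₁ (Icc a b)) r ^ 2 :=
    fun m => setIntegral_congr_fun measurableSet_Ioo fun r hr => by
      rw [DeltaOp_eqOn_deltaOpWith m Ψ isOpen_Ioo Ioo_subset_Icc_self hr]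
  have hJ : ∫ r in Ioo a b, 2 / r * (deriv Ψ r - Ψ r / r) ^ 2
      = ∫ r in Ioo a b, 2 / r * (Ψ₁ r - Ψ r / r) ^ 2 :=
    setIntegral_congr_fun measurableSet_Ioo fun r hr => by
      rw [deriv_eqOn_derivWithin isOpen_Ioo Ioo_subset_Icc_self hr]
  rw [hΔ, hΔ, hJ]
  exact setIntegral_deltaOpWith_succ_sub ha hab.le hΨ.continuousOn hΨ₁.continuousOn
    (hΨ₁.continuousOn_derivWithin hu le_rfl) hd hd₁ hΨa hΨb n

theorem delta_monotonicity_inequality (a b : ℝ) (ha : 0 < a) (hab : a < b)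
    (n : ℕ) (hn : 1 ≤ n) (Ψ : ℝ → ℝ)
    (hΨ : ContDiffOn ℝ 2 Ψ (Set.Icc a b)) (hΨa : Ψ a = 0) (hΨb : Ψ b = 0) :
    ((∫ r in Set.Ioo a b, r * (DeltaOp (n + 1) Ψ r) ^ 2)
        - (∫ r in Set.Ioo a b, r * (DeltaOp n Ψ r) ^ 2)
      ≥ (2 * (n : ℝ) + 1) * ∫ r in Set.Ioo a b, (2 / r) * (deriv Ψ r - Ψ r / r) ^ 2)
    ∧ ((∃ r ∈ Set.Icc a b, Ψ r ≠ 0) →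
      (∫ r in Set.Ioo a b, r * (DeltaOp (n + 1) Ψ r) ^ 2)
          - (∫ r in Set.Ioo a b, r * (DeltaOp n Ψ r) ^ 2)
        > (2 * (n : ℝ) + 1) * ∫ r in Set.Ioo a b, (2 / r) * (deriv Ψ r - Ψ r / r) ^ 2) := by
  have hid := setIntegral_DeltaOp_succ_sub ha hab hΨ hΨa hΨb n
  have hc : 0 < (2 * (n : ℝ) + 1) * (2 * n ^ 2 + 2 * n - 1) := by
    have : (1 : ℝ) ≤ n := by exact_mod_cast hn
    nlinarith
  have hK : 0 ≤ ∫ r in Ioo a b, Ψ r ^ 2 / r ^ 3 :=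
    setIntegral_nonneg measurableSet_Ioo fun r hr => by
      have := ha.trans hr.1
      positivity
  exact ⟨by nlinarith [mul_nonneg hc.le hK], fun hne => by
    nlinarith [mul_pos hc (setIntegral_sq_div_pow_three_pos ha hab hΨ.continuousOn hne)]⟩
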